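/- arXiv:1808.05457 — 3 statements merged into one kernel-verified Lean document; each statement's English description precedes it below -/
import Mathlib

section
/- Let V be a real inner product space, let R > 0, and let x₀, x, y ∈ V satisfy ‖x₀‖ = R, ‖x‖ < R, ‖y − x₀‖ = ‖x − x₀‖, and angle(x − x₀, y − x₀) = 2·arccos(‖x − x₀‖/(2R)). Then ‖y‖ ≥ R. (In particular, any rotation centered at a boundary point x₀ of the open ball B_R of radius R centered at the origin, through the angle θ(r) ∈ [0,π] determined by cos(θ(r)/2) = r/(2R) where r is the distance from x₀ to a point x ∈ B_R, sends x outside B_R.) -/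
/-!
Write `u = x - x₀`, `v = y - x₀` and `r = ‖u‖ = ‖v‖`. In the isosceles triangle spanned by `u`
and `v`, `‖u + v‖ = 2 r cos (θ / 2) = r ^ 2 / R`, so Cauchy–Schwarz gives
`⟪x₀, u + v⟫ ≥ -R ‖u + v‖ = -r ^ 2`. Expanding `‖x₀ + u‖ ^ 2 + ‖x₀ + v‖ ^ 2`, this is exactly
`‖x‖ ^ 2 + ‖y‖ ^ 2 ≥ 2 R ^ 2`, and `‖x‖ < R` then forces `‖y‖ > R`.
-/

open Real InnerProductGeometry

section

variable {V : Type*} [NormedAddCommGroup V] [InnerProductSpace ℝ V]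

theorem norm_add_eq_two_mul_norm_mul_cos_half_angle {u v : V} (h : ‖u‖ = ‖v‖) :
    ‖u + v‖ = 2 * ‖u‖ * cos (angle u v / 2) := by
  have hcos : 0 ≤ cos (angle u v / 2) :=
    cos_nonneg_of_neg_pi_div_two_le_of_le (by linarith [angle_nonneg u v, pi_pos])
      (by linarith [angle_le_pi u v])
  rw [← sq_eq_sq₀ (norm_nonneg _) (by positivity), norm_add_sq_real,
    ← cos_angle_mul_norm_mul_norm, ← h, mul_pow, mul_pow, cos_sq (angle u v / 2),
    mul_div_cancel₀ _ two_ne_zero]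
  ring

theorem two_mul_norm_sq_le_norm_add_sq_add_norm_add_sq {w u v : V}
    (h : ‖w‖ * ‖u + v‖ ≤ (‖u‖ ^ 2 + ‖v‖ ^ 2) / 2) :
    2 * ‖w‖ ^ 2 ≤ ‖w + u‖ ^ 2 + ‖w + v‖ ^ 2 := by
  have hinner : -(‖w‖ * ‖u + v‖) ≤ inner ℝ w (u + v) :=
    neg_le_of_abs_le (abs_real_inner_le_norm w (u + v))
  rw [inner_add_right] at hinner
  rw [norm_add_sq_real, norm_add_sq_real]
  linarith

end

theorem rotation_by_theta_displaces_general {V : Type*} [NormedAddCommGroup V]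
    [InnerProductSpace ℝ V] (R : ℝ) (x₀ x y : V)
    (hx₀ : ‖x₀‖ = R) (hx : ‖x‖ < R)
    (hdist : ‖y - x₀‖ = ‖x - x₀‖)
    (hangle : InnerProductGeometry.angle (x - x₀) (y - x₀)
      = 2 * Real.arccos (‖x - x₀‖ / (2 * R))) :
    R ≤ ‖y‖ := by
  have hR : 0 < R := (norm_nonneg x).trans_lt hx
  have hr : ‖x - x₀‖ ≤ 2 * R := (norm_sub_le x x₀).trans (by linarith)
  have hq : 0 ≤ ‖x - x₀‖ / (2 * R) := by positivity
  have hsum : ‖(x - x₀) + (y - x₀)‖ = ‖x - x₀‖ ^ 2 / R := by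
    rw [norm_add_eq_two_mul_norm_mul_cos_half_angle hdist.symm, hangle,
      mul_div_cancel_left₀ _ two_ne_zero,
      cos_arccos (by linarith) ((div_le_one (by positivity)).2 hr)]
    field_simp
  have hsq := two_mul_norm_sq_le_norm_add_sq_add_norm_add_sq (w := x₀)
    (by rw [hsum, hx₀, hdist, mul_div_cancel₀ _ hR.ne']; linarith)
  rw [add_sub_cancel, add_sub_cancel, hx₀] at hsq
  have hxR : ‖x‖ ^ 2 < R ^ 2 := pow_lt_pow_left₀ hx (norm_nonneg x) two_ne_zero
  nlinarith [norm_nonneg y]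

/-- **Elementary displacement lemma.** If `x₀` lies on the sphere of radius `R` centered at
the origin, `x` lies in the open ball of radius `R`, and `y` is obtained from `x` by a
rotation centered at `x₀` (i.e. `‖y − x₀‖ = ‖x − x₀‖`) through the angle
`θ(r) = 2·arccos(r/(2R))` where `r = ‖x − x₀‖`, then `y` lies outside the open ball of
radius `R` centered at the origin. -/
theorem rotation_by_theta_displaces {V : Type*} [NormedAddCommGroup V]
    [InnerProductSpace ℝ V] (R : ℝ) (hR : 0 < R) (x₀ x y : V)
    (hx₀ : ‖x₀‖ = R) (hx : ‖x‖ < R)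
    (hdist : ‖y - x₀‖ = ‖x - x₀‖)
    (hangle : InnerProductGeometry.angle (x - x₀) (y - x₀)
      = 2 * Real.arccos (‖x - x₀‖ / (2 * R))) :
    R ≤ ‖y‖ :=
  rotation_by_theta_displaces_general R x₀ x y hx₀ hx hdist hangle
end

section
/- Let m ≥ 1, R > 0, and for x ∈ ℂᵐ with ‖x‖ < 2R set θ(x) := 2·arccos(‖x‖/(2R)) ∈ [0,π]. Then for all c, x ∈ ℂᵐ with ‖c‖ = R and ‖x − c‖ < R (so that ‖x‖ < 2R), the rotated point e^{iθ(x)}·x (complex scalar multiplication by exp(θ(x)·i) on each coordinate) satisfies ‖e^{iθ(x)}·x − c‖ ≥ R. In other words, the map x ↦ e^{iθ(x)}·x sends the open ball of radius R centered at c entirely outside that ball, for any ball of radius R whose boundary passes through the origin. -/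
/-!
Write `z = ⟪x, c⟫`, `u = e^{iφ}` with `φ = arccos (‖x‖ / 2R)`, so that the rotation is by `u²`.
Since `|u| = 1`, `conj u² z + z = 2 (re u) conj u z`, hence
`‖u² x - c‖² + ‖x - c‖² = 2‖x‖² + 2R² - 4 cos φ re (conj u z) ≥ 2‖x‖² + 2R² - 4 cos φ ‖x‖ R = 2R²`,
and `‖x - c‖ < R` forces `‖u² x - c‖ > R`.
-/

open Complex ComplexConjugate

theorem Complex.re_conj_exp_two_mul_I_mul_add_re (φ : ℝ) (z : ℂ) :
    (conj (exp (↑(2 * φ) * I)) * z).re + z.re =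
      2 * Real.cos φ * (conj (exp (↑φ * I)) * z).re := by
  simp only [mul_re, conj_re, conj_im, exp_ofReal_mul_I_re, exp_ofReal_mul_I_im,
    Real.cos_two_mul, Real.sin_two_mul]
  ring

theorem Complex.re_conj_exp_two_mul_I_mul_add_re_le (φ : ℝ) (z : ℂ) :
    (conj (exp (↑(2 * φ) * I)) * z).re + z.re ≤ 2 * |Real.cos φ| * ‖z‖ := by
  rw [re_conj_exp_two_mul_I_mul_add_re, mul_assoc, mul_assoc]
  gcongr 2 * ?_
  calc Real.cos φ * (conj (exp (↑φ * I)) * z).re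
      ≤ |Real.cos φ * (conj (exp (↑φ * I)) * z).re| := le_abs_self _
    _ ≤ |Real.cos φ| * ‖z‖ := by
      rw [abs_mul]
      gcongr
      simpa [norm_exp_ofReal_mul_I] using abs_re_le_norm (conj (exp (↑φ * I)) * z)

theorem two_mul_sq_norm_le_sq_norm_exp_smul_sub_add_sq_norm_sub
    {E : Type*} [NormedAddCommGroup E] [InnerProductSpace ℂ E] (x c : E) (φ : ℝ)
    (hφ : 2 * ‖c‖ * |Real.cos φ| = ‖x‖) :
    2 * ‖c‖ ^ 2 ≤ ‖exp (↑(2 * φ) * I) • x - c‖ ^ 2 + ‖x - c‖ ^ 2 := by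
  have hre := re_conj_exp_two_mul_I_mul_add_re_le φ (inner ℂ x c)
  have hinner := norm_inner_le_norm (𝕜 := ℂ) x c
  rw [norm_sub_sq (𝕜 := ℂ), norm_sub_sq (𝕜 := ℂ), inner_smul_left, norm_smul,
    norm_exp_ofReal_mul_I, one_mul, RCLike.re_to_complex, RCLike.re_to_complex]
  linarith [mul_le_mul_of_nonneg_left hinner (abs_nonneg (Real.cos φ)), congrArg (· * ‖x‖) hφ]

theorem radial_rotation_displaces_general (m : ℕ) (R : ℝ)
    (c x : EuclideanSpace ℂ (Fin m)) (hc : ‖c‖ = R) (hx : ‖x - c‖ < R) :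
    R ≤ ‖Complex.exp (((2 * Real.arccos (‖x‖ / (2 * R)) : ℝ) : ℂ) * Complex.I) • x - c‖ := by
  have hR : 0 < R := (norm_nonneg _).trans_lt hx
  have ht₀ : 0 ≤ ‖x‖ / (2 * R) := by positivity
  have ht₁ : ‖x‖ / (2 * R) ≤ 1 :=
    (div_le_one (by positivity)).mpr (by linarith [norm_le_norm_add_norm_sub' x c])
  have hcos : 2 * ‖c‖ * |Real.cos (Real.arccos (‖x‖ / (2 * R)))| = ‖x‖ := by
    rw [Real.cos_arccos (by linarith) ht₁, abs_of_nonneg ht₀, hc]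
    field_simp
  have hsum := two_mul_sq_norm_le_sq_norm_exp_smul_sub_add_sq_norm_sub x c _ hcos
  rw [hc] at hsum
  refine le_of_pow_le_pow_left₀ two_ne_zero (norm_nonneg _) ?_
  linarith [pow_lt_pow_left₀ hx (norm_nonneg _) two_ne_zero]

/-- **Displacement property of the radial rotation.** For `x ∈ ℂᵐ` with `‖x‖ < 2R`, let
`θ(x) = 2·arccos(‖x‖/(2R))`. Then the map `x ↦ e^{iθ(x)}·x` sends any open ball of radius
`R` whose boundary sphere passes through the origin entirely outside that ball. -/
theorem radial_rotation_displaces (m : ℕ) (hm : 1 ≤ m) (R : ℝ) (hR : 0 < R)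
    (c x : EuclideanSpace ℂ (Fin m)) (hc : ‖c‖ = R) (hx : ‖x - c‖ < R) :
    R ≤ ‖Complex.exp (((2 * Real.arccos (‖x‖ / (2 * R)) : ℝ) : ℂ) * Complex.I) • x - c‖ :=
  radial_rotation_displaces_general m R c x hc hx
end

section
/- Let n ≥ 1 and define τ̂ : (ℝⁿ × ℝⁿ × ℝ) × (ℝⁿ × ℝⁿ × ℝ) × ℝ → (ℝ^{2n+1}) × (ℝ^{2n+1}) × ℝ by τ̂(q,p,z;Q,P,Z;θ) = ( ((q+Q)/2, (e^θ p + P)/2, z), (P − e^θ p, q − Q, e^θ − 1), (1/2)·⟪e^θ p + P, q − Q⟫ + Z − z ). Then τ̂ is injective, and its image is exactly the set of all ((x,y,z̄),(u,v,w),a) ∈ ℝ^{2n+1} × ℝ^{2n+1} × ℝ with w > −1; i.e. τ̂ is a bijection onto ℝ^{2n+1} × (ℝ^{2n} × (−1,∞)) × ℝ. -/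
noncomputable section

/-- The contact identification
`τ̂(q,p,z;Q,P,Z;θ) = (((q+Q)/2, (e^θ p + P)/2, z), (P − e^θ p, q − Q, e^θ − 1),
(1/2)⟪e^θ p + P, q − Q⟫ + Z − z)`,
from `J¹ℝⁿ × J¹ℝⁿ × ℝ` to `J¹ℝ^{2n+1} = ℝ^{2n+1} × ℝ^{2n+1} × ℝ`, where each copy of
`ℝ^{2n+1}` is written as `ℝⁿ × ℝⁿ × ℝ`. -/
def tauHat (n : ℕ) :
    ((EuclideanSpace ℝ (Fin n) × EuclideanSpace ℝ (Fin n) × ℝ) ×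
      (EuclideanSpace ℝ (Fin n) × EuclideanSpace ℝ (Fin n) × ℝ) × ℝ) →
    ((EuclideanSpace ℝ (Fin n) × EuclideanSpace ℝ (Fin n) × ℝ) ×
      (EuclideanSpace ℝ (Fin n) × EuclideanSpace ℝ (Fin n) × ℝ) × ℝ) :=
  fun w =>
    let q := w.1.1; let p := w.1.2.1; let z := w.1.2.2
    let Q := w.2.1.1; let P := w.2.1.2.1; let Z := w.2.1.2.2
    let θ := w.2.2
    (((1 / 2 : ℝ) • (q + Q), ((1 / 2 : ℝ) • (Real.exp θ • p + P), z)),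
      ((P - Real.exp θ • p, (q - Q, Real.exp θ - 1)),
        (1 / 2 : ℝ) * (inner ℝ (Real.exp θ • p + P) (q - Q) : ℝ) + Z - z))

/-- Solving `τ̂(ξ) = ((x,y,c),(u,v,w),a)`: `q, Q = x ± v/2`, `e^θ p = y − u/2`, `P = y + u/2`,
`e^θ = 1 + w`, and then `Z` from `a`, using `⟪e^θ p + P, q − Q⟫ = 2⟪y, v⟫`. -/
def tauHatInv (n : ℕ) :
    ((EuclideanSpace ℝ (Fin n) × EuclideanSpace ℝ (Fin n) × ℝ) ×
      (EuclideanSpace ℝ (Fin n) × EuclideanSpace ℝ (Fin n) × ℝ) × ℝ) →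
    ((EuclideanSpace ℝ (Fin n) × EuclideanSpace ℝ (Fin n) × ℝ) ×
      (EuclideanSpace ℝ (Fin n) × EuclideanSpace ℝ (Fin n) × ℝ) × ℝ)
  | ((x, y, c), (u, v, w), a) =>
    ((x + (1 / 2 : ℝ) • v, (1 + w)⁻¹ • (y - (1 / 2 : ℝ) • u), c),
      (x - (1 / 2 : ℝ) • v, y + (1 / 2 : ℝ) • u, a + c - inner ℝ y v), Real.log (1 + w))

theorem tauHatInv_tauHat (n : ℕ) : Function.LeftInverse (tauHatInv n) (tauHat n) := by
  rintro ⟨⟨q, p, z⟩, ⟨Q, P, Z⟩, θ⟩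
  simp only [tauHat, tauHatInv, add_sub_cancel, Real.log_exp, Prod.mk.injEq]
  refine ⟨⟨by module, ?_, trivial⟩, ⟨by module, by module, ?_⟩, trivial⟩
  · rw [show (1 / 2 : ℝ) • (Real.exp θ • p + P) - (1 / 2 : ℝ) • (P - Real.exp θ • p) =
        Real.exp θ • p by module, inv_smul_smul₀ (Real.exp_ne_zero θ)]
  · rw [real_inner_smul_left]
    ring

theorem tauHat_tauHatInv_of_neg_one_lt (n : ℕ) {η} (hη : -1 < η.2.1.2.2) : tauHat n (tauHatInv n η) = η := by
  obtain ⟨⟨x, y, c⟩, ⟨u, v, w⟩, a⟩ := η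
  have hw : 0 < 1 + w := by simp only at hη; linarith
  simp only [tauHat, tauHatInv, Real.exp_log hw, smul_inv_smul₀ hw.ne', Prod.mk.injEq]
  refine ⟨⟨by module, by module, trivial⟩, ⟨by module, by module, by ring⟩, ?_⟩
  rw [show y - (1 / 2 : ℝ) • u + (y + (1 / 2 : ℝ) • u) = (2 : ℝ) • y by module,
    show x + (1 / 2 : ℝ) • v - (x - (1 / 2 : ℝ) • v) = v by module, real_inner_smul_left]
  ring

theorem neg_one_lt_tauHat (n : ℕ) (ξ) : -1 < (tauHat n ξ).2.1.2.2 := by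
  simpa [tauHat] using Real.exp_pos ξ.2.2

theorem tauHat_injective_range_general (n : ℕ) :
    Function.Injective (tauHat n) ∧
      Set.range (tauHat n) = {y : (EuclideanSpace ℝ (Fin n) × EuclideanSpace ℝ (Fin n) × ℝ) ×
        (EuclideanSpace ℝ (Fin n) × EuclideanSpace ℝ (Fin n) × ℝ) × ℝ |
          -1 < y.2.1.2.2} := by
  refine ⟨(tauHatInv_tauHat n).injective, Set.ext fun η => ⟨?_, fun hη => ?_⟩⟩
  · rintro ⟨ξ, rfl⟩
    exact neg_one_lt_tauHat n ξ
  · exact ⟨tauHatInv n η, tauHat_tauHatInv_of_neg_one_lt n hη⟩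

/-- `τ̂` is injective and its image is exactly the open set of all
`((x,y,z̄),(u,v,w),a)` with `w > −1`; i.e. `τ̂` is a bijection onto
`ℝ^{2n+1} × (ℝ^{2n} × (−1,∞)) × ℝ`. -/
theorem tauHat_injective_range (n : ℕ) (hn : 1 ≤ n) :
    Function.Injective (tauHat n) ∧
      Set.range (tauHat n) = {y : (EuclideanSpace ℝ (Fin n) × EuclideanSpace ℝ (Fin n) × ℝ) ×
        (EuclideanSpace ℝ (Fin n) × EuclideanSpace ℝ (Fin n) × ℝ) × ℝ |
          -1 < y.2.1.2.2} :=
  tauHat_injective_range_general n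
end
end
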